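/- arXiv:1912.11364 — 6 statements merged into one kernel-verified Lean document; each statement's English description precedes it below -/
import Mathlib

section
/- Let K be a field with char K ≠ 2 and let q be a quadratic form on K⁴ whose polar bilinear form is nondegenerate and which is isotropic, i.e. q(v) = 0 for some nonzero v ∈ K⁴. Then there exist c, μ ∈ Kˣ such that q is equivalent (isometric) to the quadratic form (x₀,x₁,x₂,x₃) ↦ c·(x₀² − x₁x₂ − μ·x₃²) on K⁴. -/
/-!
A nonzero isotropic vector `v` of a nondegenerate form has a partner `w` with `q w = 0` and
`polar q v w = 1`, so `span {v, w}` is a hyperbolic plane on which `q (s v + t w) = s t`.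
A subspace `W` on which the polar form is nondegenerate is complemented by its orthogonal, and if
`q` vanished on `Wᗮ` then, by polarization, `Wᗮ` would lie in the radical; hence as long as
`W ≠ ⊤` there is an anisotropic `e ∈ Wᗮ`, and `W ⊔ K e` is again nondegenerate.
Splitting off `e₂` and `e₃` this way, with `a = q e₂` and `b = q e₃`, in the coordinates
`(e₂, v, -a w, e₃)` the form reads `a (x₀² - x₁ x₂) + b x₃² = a (x₀² - x₁ x₂ - μ x₃²)`
with `μ = -b / a`.
-/

open LinearMap.BilinForm QuadraticMap QuadraticForm Submodule

namespace QuadraticForm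

section CommRing

variable {R M : Type*} [CommRing R] [AddCommGroup M] [Module R M] {q : QuadraticForm R M}

theorem isRefl_polarBilin (q : QuadraticForm R M) : (polarBilin q).IsRefl := fun x y h => by
  rwa [polarBilin_apply_apply, polar_comm, ← polarBilin_apply_apply]

theorem apply_add_of_mem_orthogonal {W : Submodule R M} {x y : M} (hx : x ∈ W)
    (hy : y ∈ orthogonal (polarBilin q) W) : q (x + y) = q x + q y := by
  rw [QuadraticMap.map_add q, ← polarBilin_apply_apply, hy x hx, add_zero]

theorem apply_smul_add_smul_of_polar_eq_one {v w : M} (hv : q v = 0) (hw : q w = 0)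
    (hvw : polar q v w = 1) (s t : R) : q (s • v + t • w) = s * t := by
  rw [QuadraticMap.map_add q, polar_smul_left, polar_smul_right, hvw, QuadraticMap.map_smul,
    QuadraticMap.map_smul, hv, hw]
  simp

theorem apply_hyperbolic_add_orthogonal_add_orthogonal {v w e₂ e₃ : M} (hv : q v = 0)
    (hw : q w = 0) (hvw : polar q v w = 1)
    (he₂ : e₂ ∈ orthogonal (polarBilin q) (span R {v, w}))
    (he₃ : e₃ ∈ orthogonal (polarBilin q) (R ∙ e₂ ⊔ span R {v, w})) (s t r p : R) :
    q (s • v + t • w + r • e₂ + p • e₃) = s * t + r ^ 2 * q e₂ + p ^ 2 * q e₃ := by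
  have hvw_mem : s • v + t • w ∈ span R {v, w} := mem_span_pair.2 ⟨s, t, rfl⟩
  have he₂_mem : s • v + t • w + r • e₂ ∈ R ∙ e₂ ⊔ span R {v, w} :=
    add_mem (mem_sup_right hvw_mem) (mem_sup_left (smul_mem _ r (mem_span_singleton_self e₂)))
  rw [apply_add_of_mem_orthogonal he₂_mem (smul_mem _ p he₃),
    apply_add_of_mem_orthogonal hvw_mem (smul_mem _ r he₂),
    apply_smul_add_smul_of_polar_eq_one hv hw hvw, QuadraticMap.map_smul, QuadraticMap.map_smul]
  simp only [smul_eq_mul]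
  ring

end CommRing

variable {K V : Type*} [Field K] [AddCommGroup V] [Module K V] {q : QuadraticForm K V}

theorem exists_polar_eq_one_of_isotropic (hq : (polarBilin q).Nondegenerate) {v : V}
    (hv : v ≠ 0) (hqv : q v = 0) : ∃ w, q w = 0 ∧ polar q v w = 1 := by
  obtain ⟨u, hu⟩ : ∃ u, polar q v u ≠ 0 := by
    by_contra! h
    exact hv (hq.1 v h)
  obtain ⟨w, hvw⟩ : ∃ w, polar q v w = 1 :=
    ⟨(polar q v u)⁻¹ • u, by rw [polar_smul_right, smul_eq_mul, inv_mul_cancel₀ hu]⟩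
  refine ⟨w - q w • v, ?_, ?_⟩
  · rw [sub_eq_add_neg, ← neg_smul, QuadraticMap.map_add q, polar_smul_right, polar_comm, hvw,
      QuadraticMap.map_smul, hqv]
    simp
  · rw [polar_sub_right, polar_smul_right, hvw, polar_self, hqv]
    simp

theorem disjoint_span_pair_orthogonal {v w : V} (hv : q v = 0) (hw : q w = 0)
    (hvw : polar q v w = 1) :
    Disjoint (span K {v, w}) (orthogonal (polarBilin q) (span K {v, w})) := by
  refine disjoint_def.2 fun x hx hxo => ?_
  obtain ⟨s, t, rfl⟩ := mem_span_pair.1 hx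
  have hs := hxo w (subset_span (by simp))
  have ht := hxo v (subset_span (by simp))
  simp only [polarBilin_apply_apply, polar_add_right, polar_smul_right, polar_self, hv, hw,
    hvw, polar_comm q w v, smul_eq_mul] at hs ht
  simp_all

theorem disjoint_span_singleton_sup_orthogonal (h2 : (2 : K) ≠ 0) {W : Submodule K V}
    (hW : Disjoint W (orthogonal (polarBilin q) W)) {x : V}
    (hx : x ∈ orthogonal (polarBilin q) W) (hqx : q x ≠ 0) :
    Disjoint (K ∙ x ⊔ W) (orthogonal (polarBilin q) (K ∙ x ⊔ W)) := by
  refine disjoint_def.2 fun y hy hyo => ?_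
  obtain ⟨_, hcx, w, hw, rfl⟩ := mem_sup.1 hy
  obtain ⟨c, rfl⟩ := mem_span_singleton.1 hcx
  have hc : c = 0 := by
    have := hyo x (mem_sup_left (mem_span_singleton_self x))
    rw [map_add, map_smul, q.isRefl_polarBilin w x (hx w hw), polarBilin_apply_apply,
      polar_self] at this
    simpa [h2, hqx] using this
  subst hc
  rw [zero_smul, zero_add] at hyo ⊢
  exact disjoint_def.1 hW w hw fun u hu => hyo u (mem_sup_right hu)

theorem exists_mem_orthogonal_apply_ne_zero [FiniteDimensional K V]
    (hq : (polarBilin q).Nondegenerate) {W : Submodule K V}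
    (hW : Disjoint W (orthogonal (polarBilin q) W)) (hWtop : W ≠ ⊤) :
    ∃ x ∈ orthogonal (polarBilin q) W, q x ≠ 0 := by
  by_contra! h
  have hcompl := (isCompl_orthogonal_iff_disjoint q.isRefl_polarBilin).2 hW
  refine hWtop (eq_top_of_restrict_nondegenerate_of_orthogonal_eq_bot q.isRefl_polarBilin
    ((polarBilin q).nondegenerate_restrict_of_disjoint_orthogonal q.isRefl_polarBilin hW) ?_)
  refine eq_bot_iff.2 fun x hx => (mem_bot K).2 (hq.1 x fun y => ?_)
  obtain ⟨a, ha, b, hb, rfl⟩ := mem_sup.1 (hcompl.sup_eq_top ▸ mem_top : y ∈ W ⊔ _)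
  rw [map_add, q.isRefl_polarBilin a x (hx a ha), polarBilin_apply_apply, polar,
    h x hx, h b hb, h _ (add_mem hx hb)]
  simp

def quadricNormalForm (c μ : K) (x : Fin 4 → K) : K :=
  c * (x 0 ^ 2 - x 1 * x 2 - μ * x 3 ^ 2)

theorem quadricNormalForm_add (c μ : K) (x y : Fin 4 → K) :
    quadricNormalForm c μ (x + y) = quadricNormalForm c μ x + quadricNormalForm c μ y +
      c * (2 * x 0 * y 0 - x 1 * y 2 - x 2 * y 1 - 2 * μ * x 3 * y 3) := by
  simp only [quadricNormalForm, Pi.add_apply]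
  ring

theorem injective_of_apply_eq_quadricNormalForm (h2 : (2 : K) ≠ 0) {c μ : K} (hc : c ≠ 0)
    (hμ : μ ≠ 0) {L : (Fin 4 → K) →ₗ[K] V} (hL : ∀ x, q (L x) = quadricNormalForm c μ x) :
    Function.Injective L := by
  refine (injective_iff_map_eq_zero L).2 fun x hx => ?_
  have hpolar (y : Fin 4 → K) :
      c * (2 * x 0 * y 0 - x 1 * y 2 - x 2 * y 1 - 2 * μ * x 3 * y 3) = 0 := by
    have := quadricNormalForm_add c μ x y
    simp only [← hL, map_add, hx, zero_add, QuadraticMap.map_zero] at this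
    linear_combination -this
  ext i
  fin_cases i
  · simpa [hc, h2] using hpolar (Pi.single 0 1)
  · simpa [hc] using hpolar (Pi.single 2 1)
  · simpa [hc] using hpolar (Pi.single 1 1)
  · simpa [hc, h2, hμ] using hpolar (Pi.single 3 1)

end QuadraticForm

/-- Every nondegenerate isotropic quadratic form on `K⁴` (char K ≠ 2) is
equivalent to `c·(x₀² − x₁x₂ − μx₃²)` for some `c, μ ∈ Kˣ`. -/
theorem stmt_0 (K : Type*) [Field K] (hchar : ringChar K ≠ 2)
    (q : QuadraticForm K (Fin 4 → K))
    (hnd : LinearMap.BilinForm.Nondegenerate (QuadraticMap.polarBilin q))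
    (hiso : ∃ v : Fin 4 → K, v ≠ 0 ∧ q v = 0) :
    ∃ (c μ : Kˣ) (e : (Fin 4 → K) ≃ₗ[K] (Fin 4 → K)),
      ∀ v : Fin 4 → K,
        q (e v) = (c : K) * (v 0 ^ 2 - v 1 * v 2 - (μ : K) * v 3 ^ 2) := by
  classical
  have h2 : (2 : K) ≠ 0 := Ring.two_ne_zero hchar
  have span_ne_top (s : Finset (Fin 4 → K)) (hs : s.card ≤ 3) :
      span K (s : Set (Fin 4 → K)) ≠ ⊤ :=
    (span_lt_top_of_card_lt_finrank (by simpa using hs.trans_lt (by norm_num : 3 < 4))).ne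
  obtain ⟨v, hv, hqv⟩ := hiso
  obtain ⟨w, hqw, hvw⟩ := exists_polar_eq_one_of_isotropic hnd hv hqv
  have hplane := disjoint_span_pair_orthogonal hqv hqw hvw
  obtain ⟨e₂, he₂, ha⟩ := exists_mem_orthogonal_apply_ne_zero hnd hplane
    (by simpa using span_ne_top {v, w} (Finset.card_le_two.trans (by norm_num)))
  obtain ⟨e₃, he₃, hb⟩ := exists_mem_orthogonal_apply_ne_zero hnd
    (disjoint_span_singleton_sup_orthogonal h2 hplane he₂ ha)
    (by simpa [span_insert] using span_ne_top {e₂, v, w} Finset.card_le_three)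
  let L : (Fin 4 → K) →ₗ[K] (Fin 4 → K) :=
    Fintype.linearCombination K ![e₂, v, -q e₂ • w, e₃]
  have hL (x : Fin 4 → K) : q (L x) = quadricNormalForm (q e₂) (-q e₃ / q e₂) x := by
    have hLx : L x = x 1 • v + (-q e₂ * x 2) • w + x 0 • e₂ + x 3 • e₃ := by
      simp only [L, Fintype.linearCombination_apply, Fin.sum_univ_four, Matrix.cons_val_zero,
        Matrix.cons_val_one, Matrix.cons_val]
      module
    rw [hLx, apply_hyperbolic_add_orthogonal_add_orthogonal hqv hqw hvw he₂ he₃,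
      quadricNormalForm]
    field_simp
    ring
  have hμ : -q e₃ / q e₂ ≠ 0 := by simp [ha, hb]
  exact ⟨Units.mk0 _ ha, Units.mk0 _ hμ,
    LinearEquiv.ofInjectiveEndo L (injective_of_apply_eq_quadricNormalForm h2 ha hμ hL), hL⟩
end

section
/- Let K be a field with char K ≠ 2 and let r ∈ Kˣ. The map sending a pair of nonzero vectors ((u₀,u₁),(v₀,v₁)) ∈ (K²∖{0})² to the vector (r(u₀v₁+u₁v₀), 2ru₀v₀, 2ru₁v₁, u₀v₁−u₁v₀) ∈ K⁴ never takes the value 0, descends to a well-defined map κ_r : ℙ¹(K) × ℙ¹(K) → ℙ³(K), and κ_r is a bijection from ℙ¹(K) × ℙ¹(K) onto the set of points of ℙ³(K) whose representatives (x₀,x₁,x₂,x₃) satisfy x₀² − x₁x₂ − r²x₃² = 0. -/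
/-- The map `((u₀,u₁),(v₀,v₁)) ↦ (r(u₀v₁+u₁v₀), 2ru₀v₀, 2ru₁v₁, u₀v₁−u₁v₀)`. -/
def kappaVec {K : Type*} [Field K] (r : K) (u v : Fin 2 → K) : Fin 4 → K :=
  ![r * (u 0 * v 1 + u 1 * v 0), 2 * r * (u 0 * v 0), 2 * r * (u 1 * v 1),
    u 0 * v 1 - u 1 * v 0]

/-!
`κ_r` factors as the Segre map `ℙ¹ × ℙ¹ → ℙ(K^{2×2})`, `([u], [v]) ↦ [u vᵀ]`, followed by the
projectivization of a linear isomorphism `K^{2×2} ≃ K⁴` (invertible because `2r ≠ 0`) that pulls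
the quadratic form `x₀² − x₁x₂ − r²x₃²` back to `−(2r)² det`. The Segre map is injective, since
`u vᵀ` determines `u` and `v` up to scalars, and its image is the set of singular `2 × 2` matrices,
since a nonzero `2 × 2` matrix of determinant zero has proportional rows and columns.
-/

open Matrix Projectivization
open scoped LinearAlgebra.Projectivization

namespace Matrix

theorem mul_eq_mul_of_det_fin_two_eq_zero {R : Type*} [CommRing R] {M : Matrix (Fin 2) (Fin 2) R}
    (h : M.det = 0) (i j k l : Fin 2) : M i j * M k l = M i l * M k j := by
  rw [det_fin_two] at h
  fin_cases i <;> fin_cases j <;> fin_cases k <;> fin_cases l <;> simp <;>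
    first | ring | linear_combination h | linear_combination -h

variable {K : Type*} [Field K]

theorem exists_vecMulVec_eq_of_det_fin_two_eq_zero {M : Matrix (Fin 2) (Fin 2) K} (hM : M ≠ 0)
    (h : M.det = 0) : ∃ u v, vecMulVec u v = M := by
  obtain ⟨i, j, hij⟩ : ∃ i j, M i j ≠ 0 := by
    by_contra! h0
    exact hM (Matrix.ext h0)
  refine ⟨fun k => M k j, fun l => M i l / M i j, Matrix.ext fun k l => ?_⟩
  rw [vecMulVec_apply, mul_div_assoc', div_eq_iff hij]
  linear_combination mul_eq_mul_of_det_fin_two_eq_zero h k j i l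

theorem exists_smul_eq_of_vecMulVec_eq_smul {m n : Type*} {u u' : m → K} {v v' : n → K} {c : K}
    (hv : v ≠ 0) (h : vecMulVec u v = c • vecMulVec u' v') : ∃ a : K, a • u' = u := by
  obtain ⟨j, hj⟩ := Function.ne_iff.mp hv
  refine ⟨c * v' j / v j, funext fun i => ?_⟩
  have hij : u i * v j = c * (u' i * v' j) := congr_fun₂ h i j
  rw [Pi.smul_apply, smul_eq_mul, div_mul_eq_mul_div, div_eq_iff hj]
  linear_combination -hij

end Matrix

namespace Projectivization

variable {K V : Type*} [Field K] [AddCommGroup V] [Module K V]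

theorem rep_eq_zero_iff_of_homogeneous {f : V → K} {k : ℕ}
    (hf : ∀ (c : K) (x : V), f (c • x) = c ^ k * f x) (x : V) (hx : x ≠ 0) :
    f (mk K x hx).rep = 0 ↔ f x = 0 := by
  obtain ⟨a, ha⟩ := exists_smul_eq_mk_rep K x hx
  rw [← ha, Units.smul_def, hf]
  simp [a.ne_zero]

theorem map_bijective {W : Type*} [AddCommGroup W] [Module K W] (e : V ≃ₗ[K] W) :
    Function.Bijective (map (e : V →ₗ[K] W) e.injective) := by
  refine ⟨map_injective _ e.injective, fun q => ?_⟩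
  induction q using ind with | h y hy =>
  exact ⟨mk K (e.symm y) (by simpa using hy), by simp [map_mk]⟩

variable {n : Type*}

noncomputable def segre (p : ℙ K (n → K) × ℙ K (n → K)) : ℙ K (Matrix n n K) :=
  mk K (vecMulVec p.1.rep p.2.rep) (vecMulVec_ne_zero p.1.rep_nonzero p.2.rep_nonzero)

theorem segre_mk (u v : n → K) (hu : u ≠ 0) (hv : v ≠ 0) :
    segre (mk K u hu, mk K v hv) = mk K (vecMulVec u v) (vecMulVec_ne_zero hu hv) := by
  obtain ⟨a, ha⟩ := exists_smul_eq_mk_rep K u hu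
  obtain ⟨b, hb⟩ := exists_smul_eq_mk_rep K v hv
  rw [segre, mk_eq_mk_iff', ← ha, ← hb]
  exact ⟨a * b, by simp [Units.smul_def, smul_smul, mul_comm]⟩

theorem segre_injective : Function.Injective (segre : ℙ K (n → K) × ℙ K (n → K) → _) := by
  rintro ⟨p, q⟩ ⟨p', q'⟩ h
  obtain ⟨c, hc⟩ := (mk_eq_mk_iff' K _ _ _ _).mp h
  obtain ⟨a, ha⟩ := exists_smul_eq_of_vecMulVec_eq_smul q.rep_nonzero hc.symm
  have hc' : vecMulVec q.rep p.rep = c • vecMulVec q'.rep p'.rep := by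
    rw [← transpose_vecMulVec, ← hc, transpose_smul, transpose_vecMulVec]
  obtain ⟨b, hb⟩ := exists_smul_eq_of_vecMulVec_eq_smul p.rep_nonzero hc'
  rw [← mk_rep p, ← mk_rep p', ← mk_rep q, ← mk_rep q']
  exact Prod.ext ((mk_eq_mk_iff' K _ _ _ _).mpr ⟨a, ha⟩) ((mk_eq_mk_iff' K _ _ _ _).mpr ⟨b, hb⟩)

theorem range_segre_fin_two :
    Set.range (segre : ℙ K (Fin 2 → K) × ℙ K (Fin 2 → K) → _) = {p | p.rep.det = 0} := by
  have hdet (c : K) (M : Matrix (Fin 2) (Fin 2) K) := det_smul M c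
  ext p
  constructor
  · rintro ⟨⟨p, q⟩, rfl⟩
    rw [Set.mem_ofPred_eq, segre, rep_eq_zero_iff_of_homogeneous hdet]
    exact det_vecMulVec _ _
  · induction p using ind with | h M hM =>
    rw [Set.mem_ofPred_eq, rep_eq_zero_iff_of_homogeneous hdet]
    intro h
    obtain ⟨u, v, rfl⟩ := exists_vecMulVec_eq_of_det_fin_two_eq_zero hM h
    exact ⟨(mk K u (by rintro rfl; simp at hM), mk K v (by rintro rfl; simp at hM)), segre_mk ..⟩

end Projectivization

section Kappa

variable {K : Type*} [Field K]

def quadricForm (r : K) (x : Fin 4 → K) : K := x 0 ^ 2 - x 1 * x 2 - r ^ 2 * x 3 ^ 2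

def kappaEquiv {r : K} (h2 : (2 : K) ≠ 0) (hr : r ≠ 0) :
    Matrix (Fin 2) (Fin 2) K ≃ₗ[K] (Fin 4 → K) where
  toFun M := ![r * (M 0 1 + M 1 0), 2 * r * M 0 0, 2 * r * M 1 1, M 0 1 - M 1 0]
  invFun x := !![x 1 / (2 * r), (x 0 + r * x 3) / (2 * r);
    (x 0 - r * x 3) / (2 * r), x 2 / (2 * r)]
  map_add' M N := by ext i; fin_cases i <;> simp <;> ring
  map_smul' c M := by ext i; fin_cases i <;> simp <;> ring
  left_inv M := by ext i j; fin_cases i <;> fin_cases j <;> simp <;> field_simp <;> ring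
  right_inv x := by ext i; fin_cases i <;> simp <;> field_simp <;> ring

variable {r : K} (h2 : (2 : K) ≠ 0) (hr : r ≠ 0)

theorem kappaVec_eq_kappaEquiv_vecMulVec (u v : Fin 2 → K) :
    kappaVec r u v = kappaEquiv h2 hr (vecMulVec u v) := by
  ext i; fin_cases i <;> rfl

theorem quadricForm_kappaEquiv (M : Matrix (Fin 2) (Fin 2) K) :
    quadricForm r (kappaEquiv h2 hr M) = -(2 * r) ^ 2 * M.det := by
  simp [quadricForm, kappaEquiv, det_fin_two]; ring

theorem quadricForm_smul (c : K) (x : Fin 4 → K) :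
    quadricForm r (c • x) = c ^ 2 * quadricForm r x := by
  simp [quadricForm]; ring

theorem preimage_map_kappaEquiv :
    map (kappaEquiv h2 hr : Matrix (Fin 2) (Fin 2) K →ₗ[K] Fin 4 → K)
        (kappaEquiv h2 hr).injective ⁻¹' {p | quadricForm r p.rep = 0} =
      {p | p.rep.det = 0} := by
  ext p
  induction p using ind with | h M hM =>
  rw [Set.mem_preimage, map_mk, Set.mem_ofPred_eq, Set.mem_ofPred_eq,
    rep_eq_zero_iff_of_homogeneous quadricForm_smul,
    rep_eq_zero_iff_of_homogeneous (fun c N => det_smul N c),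
    LinearEquiv.coe_coe, quadricForm_kappaEquiv]
  simp [h2, hr]

end Kappa

/-- the map `kappaVec` never vanishes on pairs of nonzero vectors, descends
to a map `κ : ℙ¹(K) × ℙ¹(K) → ℙ³(K)`, and `κ` is a bijection onto the quadric
`x₀² − x₁x₂ − r²x₃² = 0`. -/
theorem stmt_1 (K : Type*) [Field K] (hchar : ringChar K ≠ 2) (r : Kˣ) :
    (∀ (u v : Fin 2 → K), u ≠ 0 → v ≠ 0 → kappaVec (r : K) u v ≠ 0) ∧
    ∃ κ : Projectivization K (Fin 2 → K) × Projectivization K (Fin 2 → K) →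
        Projectivization K (Fin 4 → K),
      (∀ (u v : Fin 2 → K) (hu : u ≠ 0) (hv : v ≠ 0)
          (hw : kappaVec (r : K) u v ≠ 0),
          κ (Projectivization.mk K u hu, Projectivization.mk K v hv)
            = Projectivization.mk K (kappaVec (r : K) u v) hw) ∧
      Set.BijOn κ Set.univ
        {p : Projectivization K (Fin 4 → K) |
          p.rep 0 ^ 2 - p.rep 1 * p.rep 2 - (r : K) ^ 2 * p.rep 3 ^ 2 = 0} := by
  have h2 : (2 : K) ≠ 0 := Ring.two_ne_zero hchar
  let e := kappaEquiv h2 r.ne_zero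
  have hκ : ∀ u v, kappaVec (r : K) u v = e (vecMulVec u v) :=
    kappaVec_eq_kappaEquiv_vecMulVec h2 r.ne_zero
  refine ⟨fun u v hu hv => ?_,
    map (e : Matrix (Fin 2) (Fin 2) K →ₗ[K] Fin 4 → K) e.injective ∘ segre,
    fun u v hu hv hw => ?_, ?_⟩
  · rw [hκ]
    exact e.map_ne_zero_iff.mpr (vecMulVec_ne_zero hu hv)
  · simp only [Function.comp_apply, segre_mk, map_mk, hκ, e, LinearEquiv.coe_coe]
  · change Set.BijOn _ _ {p : ℙ K (Fin 4 → K) | quadricForm (r : K) p.rep = 0}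
    refine (map_bijective e).bijOn_preimage.comp ?_
    rw [preimage_map_kappaEquiv, ← range_segre_fin_two, ← Set.image_univ]
    exact segre_injective.injOn.bijOn_image
end

section
/- Let K be a field with char K ≠ 2 in which −1 is a square, and let q be an anisotropic quadratic form on K³, i.e. q(v) = 0 implies v = 0. Then there exist c, λ, μ ∈ Kˣ with λ and μ not squares in K, such that q is equivalent (isometric) to the quadratic form (x,y,z) ↦ c·(λx² + y² − μz²) on K³. -/
/-!
Over a field of characteristic not `2` the form diagonalises as `a x² + b y² + c z²`, and
anisotropy forces `a, b, c ≠ 0`; take the scale `b`, `λ = a / b` and `μ = -c / b`.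
If `μ = r²` then `(0, r, 1)` is isotropic; if `λ = r²` and `i² = -1` then `(1, i r, 0)` is.
-/

open QuadraticMap

theorem QuadraticMap.Equivalent.anisotropic {R M₁ M₂ N : Type*} [CommSemiring R]
    [AddCommMonoid M₁] [AddCommMonoid M₂] [AddCommMonoid N] [Module R M₁] [Module R M₂]
    [Module R N] {Q₁ : QuadraticMap R M₁ N} {Q₂ : QuadraticMap R M₂ N}
    (h : Q₁.Equivalent Q₂) (hQ₂ : Q₂.Anisotropic) : Q₁.Anisotropic := by
  obtain ⟨f⟩ := h
  intro x hx
  apply f.injective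
  rw [map_zero]
  exact hQ₂ _ ((f.map_app x).trans hx)

theorem QuadraticForm.equivalent_weightedSumSquares_of_finrank_eq {K V ι : Type*} [Field K]
    [Invertible (2 : K)] [AddCommGroup V] [Module K V] [FiniteDimensional K V] [Fintype ι]
    (Q : QuadraticForm K V) (h : Module.finrank K V = Fintype.card ι) :
    ∃ w : ι → K, Q.Equivalent (weightedSumSquares K w) := by
  obtain ⟨v, hv⟩ :=
    LinearMap.BilinForm.exists_orthogonal_basis (QuadraticForm.associated_isSymm K Q)
  let b := v.reindex (Fintype.equivFinOfCardEq h.symm).symm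
  have hb : (associated (R := K) Q).IsOrthoᵢ b := fun i j hij => by
    simpa only [Function.onFun, b, Module.Basis.reindex_apply] using
      hv ((Equiv.injective _).ne hij)
  refine ⟨fun i => Q (b i), ?_⟩
  rw [← basisRepr_eq_of_iIsOrtho Q b hb]
  exact ⟨Q.isometryEquivBasisRepr b⟩

namespace QuadraticMap.Anisotropic

variable {R ι : Type*} [Fintype ι] [DecidableEq ι]

theorem weight_ne_zero [CommRing R] [Nontrivial R] {w : ι → R}
    (hw : (weightedSumSquares R w).Anisotropic) (i : ι) : w i ≠ 0 := by
  intro hi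
  have : (Pi.single i 1 : ι → R) = 0 :=
    hw _ (by simp [weightedSumSquares_apply, Pi.single_apply, hi])
  simpa using congrFun this i

theorem not_isSquare_neg_div [Field R] {w : ι → R}
    (hw : (weightedSumSquares R w).Anisotropic) {i j : ι} (hij : i ≠ j) :
    ¬ IsSquare (-(w i / w j)) := by
  rintro ⟨r, hr⟩
  have hj := hw.weight_ne_zero j
  let v : ι → R := Pi.single i 1 + Pi.single j r
  have hv : weightedSumSquares R w v = 0 := by
    rw [weightedSumSquares_apply,
      Fintype.sum_eq_add i j hij (fun k hk => by simp [v, hk.1, hk.2])]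
    simp only [v, Pi.add_apply, Pi.single_eq_same, Pi.single_eq_of_ne hij,
      Pi.single_eq_of_ne hij.symm, smul_eq_mul]
    field_simp at hr
    linear_combination -hr
  simpa [v, Pi.single_eq_of_ne hij] using congrFun (hw v hv) i

end QuadraticMap.Anisotropic

/-- over a field `K` of char ≠ 2 in which `−1` is a square, every anisotropic
quadratic form on `K³` is equivalent to `c·(λx² + y² − μz²)` with `λ, μ` nonsquares. -/
theorem stmt_3 (K : Type*) [Field K] (hchar : ringChar K ≠ 2)
    (hneg : ∃ i : K, i ^ 2 = -1)
    (q : QuadraticForm K (Fin 3 → K))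
    (haniso : ∀ v : Fin 3 → K, q v = 0 → v = 0) :
    ∃ (c l μ : Kˣ), (¬ ∃ r : K, r ^ 2 = (l : K)) ∧ (¬ ∃ r : K, r ^ 2 = (μ : K)) ∧
      ∃ e : (Fin 3 → K) ≃ₗ[K] (Fin 3 → K),
        ∀ v : Fin 3 → K,
          q (e v) = (c : K) * ((l : K) * v 0 ^ 2 + v 1 ^ 2 - (μ : K) * v 2 ^ 2) := by
  have : Invertible (2 : K) := invertibleOfNonzero (Ring.two_ne_zero hchar)
  obtain ⟨w, hqw⟩ := q.equivalent_weightedSumSquares_of_finrank_eq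
    (Module.finrank_fintype_fun_eq_card K)
  have hw : (weightedSumSquares K w).Anisotropic := hqw.symm.anisotropic haniso
  have hw₁ := hw.weight_ne_zero 1
  obtain ⟨f⟩ := hqw
  obtain ⟨i, hi⟩ := hneg
  refine ⟨Units.mk0 (w 1) hw₁, Units.mk0 (w 0 / w 1) (div_ne_zero (hw.weight_ne_zero 0) hw₁),
    Units.mk0 (-(w 2 / w 1)) (neg_ne_zero.mpr (div_ne_zero (hw.weight_ne_zero 2) hw₁)),
    ?_, ?_, f.symm.toLinearEquiv, fun v => ?_⟩
  · rintro ⟨r, hr⟩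
    refine hw.not_isSquare_neg_div (i := 0) (j := 1) (by decide) ⟨i * r, ?_⟩
    rw [Units.val_mk0] at hr
    linear_combination hr - r ^ 2 * hi
  · rintro ⟨r, hr⟩
    exact hw.not_isSquare_neg_div (i := 2) (j := 1) (by decide)
      ⟨r, by simpa [_root_.sq] using hr.symm⟩
  · rw [IsometryEquiv.coe_toLinearEquiv, f.symm.map_app, weightedSumSquares_apply,
      Fin.sum_univ_three]
    simp only [Units.val_mk0, smul_eq_mul]
    field_simp
    ring
end

section
/- Let K ⊆ L be a field extension, where K has at least three elements. Then the image of PGL₂(K) in PGL₂(L) (the classes of matrices with entries in K) is its own normalizer in PGL₂(L): if g ∈ PGL₂(L) satisfies g·PGL₂(K)·g⁻¹ = PGL₂(K), then g ∈ PGL₂(K). -/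
/-- The subset `PGL₂(K)` of `PGL₂(L) = GL₂(L)/center`: classes of matrices all of whose
entries lie in the subfield `K` (i.e. in the range of `algebraMap K L`). -/
def pglOfSubfield (K L : Type*) [Field K] [Field L] [Algebra K L] :
    Set (Matrix.GeneralLinearGroup (Fin 2) L ⧸
      Subgroup.center (Matrix.GeneralLinearGroup (Fin 2) L)) :=
  {x | ∃ M : Matrix.GeneralLinearGroup (Fin 2) L,
        (∀ i j, (M : Matrix (Fin 2) (Fin 2) L) i j ∈ Set.range (algebraMap K L)) ∧
        (QuotientGroup.mk M : Matrix.GeneralLinearGroup (Fin 2) L ⧸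
            Subgroup.center (Matrix.GeneralLinearGroup (Fin 2) L)) = x}

namespace Stmt6Aux

open Matrix

variable {L : Type*} [Field L]

noncomputable def mkGL (M : Matrix (Fin 2) (Fin 2) L) (h : M.det ≠ 0) :
    Matrix.GeneralLinearGroup (Fin 2) L :=
  ⟨M, M⁻¹, Matrix.mul_nonsing_inv M (isUnit_iff_ne_zero.2 h),
    Matrix.nonsing_inv_mul M (isUnit_iff_ne_zero.2 h)⟩

@[simp] lemma mkGL_val (M : Matrix (Fin 2) (Fin 2) L) (h) : (mkGL M h).val = M := rfl

lemma scalar_mem_center (r : L) (u : Matrix.GeneralLinearGroup (Fin 2) L)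
    (hu : u.val = r • (1 : Matrix (Fin 2) (Fin 2) L)) :
    u ∈ Subgroup.center (Matrix.GeneralLinearGroup (Fin 2) L) := by
  refine Subgroup.mem_center_iff.2 fun g => ?_
  refine Units.ext ?_
  show (g.val * u.val) = u.val * g.val
  rw [hu, mul_smul_comm, smul_mul_assoc, one_mul, mul_one]

lemma center_is_scalar (u : Matrix.GeneralLinearGroup (Fin 2) L)
    (hu : u ∈ Subgroup.center (Matrix.GeneralLinearGroup (Fin 2) L)) :
    ∃ r : L, r ≠ 0 ∧ u.val = r • (1 : Matrix (Fin 2) (Fin 2) L) := by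
  have hcom := Subgroup.mem_center_iff.1 hu
  have hU : (mkGL !![(1:L),1;0,1] (by simp [Matrix.det_fin_two_of])) * u
      = u * (mkGL !![(1:L),1;0,1] (by simp [Matrix.det_fin_two_of])) := hcom _
  have hV : (mkGL !![(1:L),0;1,1] (by simp [Matrix.det_fin_two_of])) * u
      = u * (mkGL !![(1:L),0;1,1] (by simp [Matrix.det_fin_two_of])) := hcom _
  have hU' : !![(1:L),1;0,1] * u.val = u.val * !![(1:L),1;0,1] := congrArg Units.val hU
  have hV' : !![(1:L),0;1,1] * u.val = u.val * !![(1:L),0;1,1] := congrArg Units.val hV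
  set B := u.val with hB
  have hBeta : B = !![B 0 0, B 0 1; B 1 0, B 1 1] := Matrix.eta_fin_two B
  rw [hBeta] at hU' hV'
  rw [Matrix.mul_fin_two, Matrix.mul_fin_two] at hU' hV'
  have e1 := congrFun (congrFun hU' 0) 0
  have e2 := congrFun (congrFun hU' 0) 1
  have f1 := congrFun (congrFun hV' 0) 0
  have f2 := congrFun (congrFun hV' 1) 1
  simp at e1 e2 f1 f2
  have h10 : B 1 0 = 0 := e1
  have h01 : B 0 1 = 0 := f1
  have hdiag : B 0 0 = B 1 1 := by linear_combination (-1 : L) * e2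
  refine ⟨B 0 0, ?_, ?_⟩
  · intro h0
    have hdet : IsUnit B.det := (Matrix.isUnit_iff_isUnit_det B).1 u.isUnit
    rw [Matrix.det_fin_two, h10, h01, h0] at hdet
    simp at hdet
  · rw [hBeta, h10, h01, hdiag, Matrix.smul_one_eq_diagonal]
    ext i j
    fin_cases i <;> fin_cases j <;> simp [Matrix.diagonal, hdiag]

/-- ratio property of a matrix w.r.t. a subfield -/
def RM (Kr : Subfield L) (C : Matrix (Fin 2) (Fin 2) L) : Prop :=
  ∀ i j i' j', C i' j' ≠ 0 → C i j / C i' j' ∈ Kr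

lemma ratS {K : Type*} [Field K] [Algebra K L]
    (B : Matrix.GeneralLinearGroup (Fin 2) L)
    (hB : (QuotientGroup.mk B : Matrix.GeneralLinearGroup (Fin 2) L ⧸
        Subgroup.center (Matrix.GeneralLinearGroup (Fin 2) L)) ∈ pglOfSubfield K L) :
    ∀ i j i' j', B.val i' j' ≠ 0 →
      B.val i j / B.val i' j' ∈ (algebraMap K L).fieldRange := by
  obtain ⟨N, hN, hNB⟩ := hB
  have hcen := QuotientGroup.eq.1 hNB
  obtain ⟨r, hr, hval⟩ := center_is_scalar _ hcen
  have hBv : B.val = r • N.val := by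
    have h1 : N * (N⁻¹ * B) = B := by group
    calc B.val = (N * (N⁻¹ * B)).val := by rw [h1]
    _ = N.val * (N⁻¹ * B).val := rfl
    _ = N.val * (r • 1) := by rw [hval]
    _ = r • N.val := by rw [mul_smul_comm, mul_one]
  intro i j i' j' hne
  rw [hBv] at hne ⊢
  simp only [Matrix.smul_apply, smul_eq_mul] at hne ⊢
  have hN' : N.val i' j' ≠ 0 := fun h => hne (by rw [h, mul_zero])
  rw [mul_div_mul_left _ _ hr]
  obtain ⟨x, hx⟩ := hN i j
  obtain ⟨y, hy⟩ := hN i' j'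
  exact Subfield.div_mem _ (RingHom.mem_fieldRange.2 ⟨x, hx⟩) (RingHom.mem_fieldRange.2 ⟨y, hy⟩)

lemma RM_conj {K : Type*} [Field K] [Algebra K L]
    (A M : Matrix.GeneralLinearGroup (Fin 2) L)
    (hM : (QuotientGroup.mk (A * M * A⁻¹) : Matrix.GeneralLinearGroup (Fin 2) L ⧸
        Subgroup.center (Matrix.GeneralLinearGroup (Fin 2) L)) ∈ pglOfSubfield K L) :
    RM (algebraMap K L).fieldRange (A.val * M.val * adjugate A.val) := by
  have hd0 : A.val.det ≠ 0 :=
    isUnit_iff_ne_zero.1 ((Matrix.isUnit_iff_isUnit_det A.val).1 A.isUnit)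
  have hscale : A.val * M.val * adjugate A.val = A.val.det • ((A * M * A⁻¹).val) := by
    have h1 : ((A * M * A⁻¹).val) = A.val * M.val * (A.val)⁻¹ := by
      rw [Units.val_mul, Units.val_mul, Matrix.coe_units_inv]
    rw [h1, Matrix.inv_def, Ring.inverse_eq_inv', Matrix.mul_smul, smul_smul,
      mul_inv_cancel₀ hd0, one_smul]
  intro i j i' j' hne
  rw [hscale] at hne ⊢
  simp only [Matrix.smul_apply, smul_eq_mul] at hne ⊢
  have hB : (A * M * A⁻¹).val i' j' ≠ 0 := fun h => hne (by rw [h, mul_zero])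
  rw [mul_div_mul_left _ _ hd0]
  exact ratS _ hM i j i' j' hB

lemma RM_conj' {K : Type*} [Field K] [Algebra K L]
    (A M : Matrix.GeneralLinearGroup (Fin 2) L)
    (hM : (QuotientGroup.mk (A⁻¹ * M * A) : Matrix.GeneralLinearGroup (Fin 2) L ⧸
        Subgroup.center (Matrix.GeneralLinearGroup (Fin 2) L)) ∈ pglOfSubfield K L) :
    RM (algebraMap K L).fieldRange (adjugate A.val * M.val * A.val) := by
  have hd0 : A.val.det ≠ 0 :=
    isUnit_iff_ne_zero.1 ((Matrix.isUnit_iff_isUnit_det A.val).1 A.isUnit)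
  have hscale : adjugate A.val * M.val * A.val = A.val.det • ((A⁻¹ * M * A).val) := by
    have h1 : ((A⁻¹ * M * A).val) = (A.val)⁻¹ * M.val * A.val := by
      rw [Units.val_mul, Units.val_mul, Matrix.coe_units_inv]
    rw [h1, Matrix.inv_def, Ring.inverse_eq_inv', Matrix.smul_mul, Matrix.smul_mul, smul_smul,
      mul_inv_cancel₀ hd0, one_smul]
  intro i j i' j' hne
  rw [hscale] at hne ⊢
  simp only [Matrix.smul_apply, smul_eq_mul] at hne ⊢
  have hB : (A⁻¹ * M * A).val i' j' ≠ 0 := fun h => hne (by rw [h, mul_zero])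
  rw [mul_div_mul_left _ _ hd0]
  exact ratS _ hM i j i' j' hB

lemma core (Kr : Subfield L) (a b c d s : L)
    (hdet : a * d - b * c ≠ 0) (hs : s ∈ Kr) (hs0 : s ≠ 0) (hs1 : s ≠ 1)
    (hU : RM Kr !![a*d - b*c - a*c, a*a; -(c*c), a*d - b*c + a*c])
    (hU' : RM Kr !![a*d - b*c + b*d, -(b*b); d*d, a*d - b*c - b*d])
    (hVU : RM Kr !![a*d - b*c + c*d, d*d; -(c*c), a*d - b*c - c*d])
    (hD : RM Kr !![s*(a*d) - b*c, (1-s)*(a*b); (s-1)*(c*d), a*d - s*(b*c)])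
    (hD' : RM Kr !![s*(a*d) - b*c, (s-1)*(b*d); (1-s)*(a*c), a*d - s*(b*c)]) :
    ∃ e : L, e ≠ 0 ∧ e * a ∈ Kr ∧ e * b ∈ Kr ∧ e * c ∈ Kr ∧ e * d ∈ Kr := by
  have hsm1 : s - 1 ≠ 0 := sub_ne_zero.2 hs1
  have h1ms : (1 : L) - s ≠ 0 := fun h => hs1 (by linear_combination -h)
  by_cases hc : c = 0
  · have ha : a ≠ 0 := fun h => hdet (by rw [h, hc]; ring)
    have hd : d ≠ 0 := fun h => hdet (by rw [h, hc]; ring)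
    have haa : (a * a : L) ≠ 0 := mul_ne_zero ha ha
    have hdd : (d * d : L) ≠ 0 := mul_ne_zero hd hd
    have h1 : (a*d - b*c - a*c) / (a*a) ∈ Kr := hU 0 0 0 1 haa
    have h2 : (a*d - b*c + b*d) / (d*d) ∈ Kr := hU' 0 0 1 0 hdd
    refine ⟨a⁻¹, inv_ne_zero ha, ?_, ?_, ?_, ?_⟩
    · rw [inv_mul_cancel₀ ha]; exact Kr.one_mem
    · have key : a⁻¹ * b
          = ((a*d - b*c + b*d) / (d*d)) * ((a*d - b*c - a*c) / (a*a)) - 1 := by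
        rw [hc]; field_simp; ring
      rw [key]; exact Kr.sub_mem (Kr.mul_mem h2 h1) Kr.one_mem
    · rw [hc, mul_zero]; exact Kr.zero_mem
    · have key : a⁻¹ * d = (a*d - b*c - a*c) / (a*a) := by
        rw [hc]; field_simp; ring
      rw [key]; exact h1
  · have hcc : -(c * c) ≠ 0 := neg_ne_zero.2 (mul_ne_zero hc hc)
    have hA1 : (a*d - b*c - a*c) / -(c*c) ∈ Kr := hU 0 0 1 0 hcc
    have hA2 : (a*d - b*c + a*c) / -(c*c) ∈ Kr := hU 1 1 1 0 hcc
    have hB1 : (a*d - b*c + c*d) / -(c*c) ∈ Kr := hVU 0 0 1 0 hcc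
    have hB2 : (a*d - b*c - c*d) / -(c*c) ∈ Kr := hVU 1 1 1 0 hcc
    suffices h : c⁻¹ * a ∈ Kr ∧ c⁻¹ * b ∈ Kr ∧ c⁻¹ * d ∈ Kr by
      exact ⟨c⁻¹, inv_ne_zero hc, h.1, h.2.1,
        by rw [inv_mul_cancel₀ hc]; exact Kr.one_mem, h.2.2⟩
    by_cases hsp1 : s + 1 = 0
    · -- here s = -1, hence 2 ≠ 0 in L; use the unipotent relations
      have h2ne : (2 : L) ≠ 0 := fun h => h1ms (by linear_combination h - hsp1)
      have h2mem : (2 : L) ∈ Kr := by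
        have : (2 : L) = 1 + 1 := by norm_num
        rw [this]; exact Kr.add_mem Kr.one_mem Kr.one_mem
      have hac : c⁻¹ * a ∈ Kr := by
        have key : c⁻¹ * a
            = ((a*d - b*c - a*c) / -(c*c) - (a*d - b*c + a*c) / -(c*c)) / 2 := by
          field_simp; ring
        rw [key]; exact Kr.div_mem (Kr.sub_mem hA1 hA2) h2mem
      have hdc : c⁻¹ * d ∈ Kr := by
        have key : c⁻¹ * d
            = ((a*d - b*c - c*d) / -(c*c) - (a*d - b*c + c*d) / -(c*c)) / 2 := by
          field_simp; ring
        rw [key]; exact Kr.div_mem (Kr.sub_mem hB2 hB1) h2mem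
      have hbc : c⁻¹ * b ∈ Kr := by
        have key : c⁻¹ * b = (c⁻¹ * a) * (c⁻¹ * d)
            + ((a*d - b*c - a*c) / -(c*c) + (a*d - b*c + a*c) / -(c*c)) / 2 := by
          field_simp; ring
        rw [key]
        exact Kr.add_mem (Kr.mul_mem hac hdc) (Kr.div_mem (Kr.add_mem hA1 hA2) h2mem)
      exact ⟨hac, hbc, hdc⟩
    · by_cases hd : d = 0
      · have hb : b ≠ 0 := fun h => hdet (by rw [h, hd]; ring)
        have hbc : c⁻¹ * b ∈ Kr := by
          have key : c⁻¹ * b = (a*d - b*c + c*d) / -(c*c) := by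
            rw [hd]; field_simp; ring
          rw [key]; exact hB1
        have hac : c⁻¹ * a ∈ Kr := by
          have key : c⁻¹ * a = c⁻¹ * b - (a*d - b*c + a*c) / -(c*c) := by
            rw [hd]; field_simp; ring
          rw [key]; exact Kr.sub_mem hbc hA2
        exact ⟨hac, hbc, by rw [hd, mul_zero]; exact Kr.zero_mem⟩
      · have hDden : (s-1)*(c*d) ≠ 0 := mul_ne_zero hsm1 (mul_ne_zero hc hd)
        have hP : (s*(a*d) - b*c) / ((s-1)*(c*d)) ∈ Kr := hD 0 0 1 0 hDden
        have hQ : (a*d - s*(b*c)) / ((s-1)*(c*d)) ∈ Kr := hD 1 1 1 0 hDden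
        have hspmem : s + 1 ∈ Kr := Kr.add_mem hs Kr.one_mem
        have hac : c⁻¹ * a ∈ Kr := by
          have key : c⁻¹ * a
              = (s * ((s*(a*d) - b*c) / ((s-1)*(c*d)))
                - (a*d - s*(b*c)) / ((s-1)*(c*d))) / (s + 1) := by
            field_simp; ring
          rw [key]; exact Kr.div_mem (Kr.sub_mem (Kr.mul_mem hs hP) hQ) hspmem
        have hbd : b * d⁻¹ ∈ Kr := by
          have key : b * d⁻¹
              = ((s*(a*d) - b*c) / ((s-1)*(c*d))
                - s * ((a*d - s*(b*c)) / ((s-1)*(c*d)))) / (s + 1) := by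
            field_simp; ring
          rw [key]; exact Kr.div_mem (Kr.sub_mem hP (Kr.mul_mem hs hQ)) hspmem
        by_cases ha : a = 0
        · have hb : b ≠ 0 := fun h => hdet (by rw [h, ha]; ring)
          have hbc : c⁻¹ * b ∈ Kr := by
            have key : c⁻¹ * b = (a*d - b*c + a*c) / -(c*c) := by
              rw [ha]; field_simp; ring
            rw [key]; exact hA2
          have hdc : c⁻¹ * d ∈ Kr := by
            have key : c⁻¹ * d = c⁻¹ * b - (a*d - b*c + c*d) / -(c*c) := by
              rw [ha]; field_simp; ring
            rw [key]; exact Kr.sub_mem hbc hB1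
          exact ⟨by rw [ha, mul_zero]; exact Kr.zero_mem, hbc, hdc⟩
        · have hDden' : (1-s)*(a*c) ≠ 0 := mul_ne_zero h1ms (mul_ne_zero ha hc)
          have hP' : (s*(a*d) - b*c) / ((1-s)*(a*c)) ∈ Kr := hD' 0 0 1 0 hDden'
          have hQ' : (a*d - s*(b*c)) / ((1-s)*(a*c)) ∈ Kr := hD' 1 1 1 0 hDden'
          have hdc : c⁻¹ * d ∈ Kr := by
            have key : c⁻¹ * d
                = ((a*d - s*(b*c)) / ((1-s)*(a*c))
                  - s * ((s*(a*d) - b*c) / ((1-s)*(a*c)))) / (s + 1) := by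
              field_simp; ring
            rw [key]; exact Kr.div_mem (Kr.sub_mem hQ' (Kr.mul_mem hs hP')) hspmem
          have hbc : c⁻¹ * b ∈ Kr := by
            have key : c⁻¹ * b = (b * d⁻¹) * (c⁻¹ * d) := by
              field_simp
            rw [key]; exact Kr.mul_mem hbd hdc
          exact ⟨hac, hbc, hdc⟩

end Stmt6Aux

namespace Stmt6Aux

lemma exists_ne01 {K : Type*} [Field K] (hK : 3 ≤ Cardinal.mk K) :
    ∃ t : K, t ≠ 0 ∧ t ≠ 1 := by
  by_contra h
  push_neg at h
  have hsurj : Function.Surjective (fun b : ULift Bool => if b.down then (1:K) else 0) := by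
    intro t
    by_cases ht : t = 0
    · exact ⟨⟨false⟩, by simp [ht]⟩
    · exact ⟨⟨true⟩, by simp [h t ht]⟩
  have h2 : Cardinal.mk K ≤ 2 := by
    have := Cardinal.mk_le_of_surjective hsurj
    simpa using this
  have : (3 : Cardinal) ≤ 2 := hK.trans h2
  norm_num at this

end Stmt6Aux

/-- for a field extension `K ⊆ L` with `K` having at least three elements,
the image of `PGL₂(K)` in `PGL₂(L)` is its own normaliser. -/
theorem stmt_6 (K L : Type*) [Field K] [Field L] [Algebra K L]
    (hK : 3 ≤ Cardinal.mk K)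
    (g : Matrix.GeneralLinearGroup (Fin 2) L ⧸
      Subgroup.center (Matrix.GeneralLinearGroup (Fin 2) L))
    (hg : (fun x => g * x * g⁻¹) '' pglOfSubfield K L = pglOfSubfield K L) :
    g ∈ pglOfSubfield K L := by
  classical
  open Stmt6Aux Matrix in
  obtain ⟨A, rfl⟩ := QuotientGroup.mk_surjective g
  set S := pglOfSubfield K L with hS
  have hfwd : ∀ M : Matrix.GeneralLinearGroup (Fin 2) L,
      (QuotientGroup.mk M : _) ∈ S → (QuotientGroup.mk (A * M * A⁻¹) : _) ∈ S := by
    intro M hM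
    rw [← hg]
    refine ⟨QuotientGroup.mk M, hM, ?_⟩
    simp [QuotientGroup.mk_mul, QuotientGroup.mk_inv]
  have hbwd : ∀ M : Matrix.GeneralLinearGroup (Fin 2) L,
      (QuotientGroup.mk M : _) ∈ S → (QuotientGroup.mk (A⁻¹ * M * A) : _) ∈ S := by
    intro M hM
    rw [← hg] at hM
    obtain ⟨x, hxS, hx⟩ := hM
    have heq : (QuotientGroup.mk (A⁻¹ * M * A) : _) = x := by
      rw [QuotientGroup.mk_mul, QuotientGroup.mk_mul, QuotientGroup.mk_inv, ← hx]
      group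
    rw [heq]; exact hxS
  -- main computation
  set Kr := (algebraMap K L).fieldRange with hKr
  have hdet0 : A.val.det ≠ 0 :=
    isUnit_iff_ne_zero.1 ((Matrix.isUnit_iff_isUnit_det A.val).1 A.isUnit)
  set a := A.val 0 0 with ha_def
  set b := A.val 0 1 with hb_def
  set c := A.val 1 0 with hc_def
  set d := A.val 1 1 with hd_def
  have hAv : A.val = !![a, b; c, d] := Matrix.eta_fin_two A.val
  have hadj : adjugate A.val = !![d, -b; -c, a] := Matrix.adjugate_fin_two A.val
  have hΔ : a * d - b * c ≠ 0 := by
    rw [Matrix.det_fin_two] at hdet0; exact hdet0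
  -- the element t of K distinct from 0 and 1
  obtain ⟨t, ht0, ht1⟩ := exists_ne01 hK
  set s := algebraMap K L t with hs_def
  have hs0' : s ≠ 0 := fun h => ht0 ((algebraMap K L).injective (by rw [map_zero, ← hs_def]; exact h))
  have hs1' : s ≠ 1 := fun h => ht1 ((algebraMap K L).injective (by rw [_root_.map_one, ← hs_def]; exact h))
  have hsmem : s ∈ Kr := RingHom.mem_fieldRange.2 ⟨t, rfl⟩
  -- the three auxiliary elements of PGL₂(K)
  have hdetU : (!![(1:L),1;0,1]).det ≠ 0 := by simp [Matrix.det_fin_two_of]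
  have hdetU2 : (!![(1:L),0;1,1]).det ≠ 0 := by simp [Matrix.det_fin_two_of]
  have hdetD : (!![s,0;0,1]).det ≠ 0 := by simp [Matrix.det_fin_two_of, hs0']
  set U : Matrix.GeneralLinearGroup (Fin 2) L := mkGL _ hdetU with hU_def
  set U2 : Matrix.GeneralLinearGroup (Fin 2) L := mkGL _ hdetU2 with hU2_def
  set D : Matrix.GeneralLinearGroup (Fin 2) L := mkGL _ hdetD with hD_def
  have hUS : (QuotientGroup.mk U : _) ∈ S := by
    refine ⟨U, ?_, rfl⟩
    intro i j
    fin_cases i <;> fin_cases j <;>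
      first
        | exact ⟨1, map_one _⟩
        | exact ⟨0, map_zero _⟩
  have hU2S : (QuotientGroup.mk U2 : _) ∈ S := by
    refine ⟨U2, ?_, rfl⟩
    intro i j
    fin_cases i <;> fin_cases j <;>
      first
        | exact ⟨1, map_one _⟩
        | exact ⟨0, map_zero _⟩
  have hDS : (QuotientGroup.mk D : _) ∈ S := by
    refine ⟨D, ?_, rfl⟩
    intro i j
    fin_cases i <;> fin_cases j <;>
      first
        | exact ⟨t, rfl⟩
        | exact ⟨1, map_one _⟩
        | exact ⟨0, map_zero _⟩
  -- matrix computations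
  have hCU : A.val * !![(1:L),1;0,1] * adjugate A.val
      = !![a*d - b*c - a*c, a*a; -(c*c), a*d - b*c + a*c] := by
    rw [hadj, hAv, Matrix.mul_fin_two, Matrix.mul_fin_two]
    ext i j; fin_cases i <;> fin_cases j <;> simp <;> ring
  have hCU2 : A.val * !![(1:L),0;1,1] * adjugate A.val
      = !![a*d - b*c + b*d, -(b*b); d*d, a*d - b*c - b*d] := by
    rw [hadj, hAv, Matrix.mul_fin_two, Matrix.mul_fin_two]
    ext i j; fin_cases i <;> fin_cases j <;> simp <;> ring
  have hCVU : adjugate A.val * !![(1:L),1;0,1] * A.val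
      = !![a*d - b*c + c*d, d*d; -(c*c), a*d - b*c - c*d] := by
    rw [hadj, hAv, Matrix.mul_fin_two, Matrix.mul_fin_two]
    ext i j; fin_cases i <;> fin_cases j <;> simp <;> ring
  have hCD : A.val * !![s,0;0,1] * adjugate A.val
      = !![s*(a*d) - b*c, (1-s)*(a*b); (s-1)*(c*d), a*d - s*(b*c)] := by
    rw [hadj, hAv, Matrix.mul_fin_two, Matrix.mul_fin_two]
    ext i j; fin_cases i <;> fin_cases j <;> simp <;> ring
  have hCVD : adjugate A.val * !![s,0;0,1] * A.val
      = !![s*(a*d) - b*c, (s-1)*(b*d); (1-s)*(a*c), a*d - s*(b*c)] := by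
    rw [hadj, hAv, Matrix.mul_fin_two, Matrix.mul_fin_two]
    ext i j; fin_cases i <;> fin_cases j <;> simp <;> ring
  -- the five RM facts
  have rU : RM Kr !![a*d - b*c - a*c, a*a; -(c*c), a*d - b*c + a*c] := by
    have h := RM_conj A U (hfwd U hUS)
    simp only [hU_def, mkGL_val] at h
    rwa [hCU] at h
  have rU2 : RM Kr !![a*d - b*c + b*d, -(b*b); d*d, a*d - b*c - b*d] := by
    have h := RM_conj A U2 (hfwd U2 hU2S)
    simp only [hU2_def, mkGL_val] at h
    rwa [hCU2] at h
  have rVU : RM Kr !![a*d - b*c + c*d, d*d; -(c*c), a*d - b*c - c*d] := by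
    have h := RM_conj' A U (hbwd U hUS)
    simp only [hU_def, mkGL_val] at h
    rwa [hCVU] at h
  have rD : RM Kr !![s*(a*d) - b*c, (1-s)*(a*b); (s-1)*(c*d), a*d - s*(b*c)] := by
    have h := RM_conj A D (hfwd D hDS)
    simp only [hD_def, mkGL_val] at h
    rwa [hCD] at h
  have rVD : RM Kr !![s*(a*d) - b*c, (s-1)*(b*d); (1-s)*(a*c), a*d - s*(b*c)] := by
    have h := RM_conj' A D (hbwd D hDS)
    simp only [hD_def, mkGL_val] at h
    rwa [hCVD] at h
  obtain ⟨e, he, hea, heb, hec, hed⟩ := core Kr a b c d s hΔ hsmem hs0' hs1' rU rU2 rVU rD rVD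
  -- conclusion
  have hdet0' : IsUnit A.val.det := isUnit_iff_ne_zero.2 hdet0
  refine ⟨⟨e • A.val, e⁻¹ • (A.val)⁻¹, ?_, ?_⟩, ?_, ?_⟩
  · rw [Matrix.smul_mul, Matrix.mul_smul, smul_smul, mul_inv_cancel₀ he, one_smul,
      Matrix.mul_nonsing_inv _ hdet0']
  · rw [Matrix.smul_mul, Matrix.mul_smul, smul_smul, inv_mul_cancel₀ he, one_smul,
      Matrix.nonsing_inv_mul _ hdet0']
  · intro i j
    fin_cases i <;> fin_cases j
    · obtain ⟨x, hx⟩ := RingHom.mem_fieldRange.1 hea; exact ⟨x, hx⟩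
    · obtain ⟨x, hx⟩ := RingHom.mem_fieldRange.1 heb; exact ⟨x, hx⟩
    · obtain ⟨x, hx⟩ := RingHom.mem_fieldRange.1 hec; exact ⟨x, hx⟩
    · obtain ⟨x, hx⟩ := RingHom.mem_fieldRange.1 hed; exact ⟨x, hx⟩
  · refine QuotientGroup.eq.2 (scalar_mem_center e⁻¹ _ ?_)
    show (e⁻¹ • (A.val)⁻¹) * A.val = e⁻¹ • 1
    rw [Matrix.smul_mul, Matrix.nonsing_inv_mul _ hdet0']
end

section
/- Let k be an algebraically closed field of characteristic 7 and let F = (x²+yz)² + xy³ ∈ k[x,y,z]. If M ∈ GL₃(k) and e ∈ kˣ satisfy F ∘ M = e·F (where F ∘ M denotes substituting into F the three linear forms determined by M), then M is a nonzero scalar multiple of the diagonal matrix diag(ω, ω², 1) for some ω ∈ k with ω³ = 1; conversely, F ∘ diag(ω, ω², 1) = ω⁴·F for every ω with ω³ = 1. In particular, the group of automorphisms of ℙ²_k preserving the quartic curve F = 0 is the cyclic group of order 3 consisting of the maps [x:y:z] ↦ [ωx : ω²y : z] with ω³ = 1. -/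
/-!
In characteristic `≠ 2` the only singular point of the quartic `F = (x² + yz)² + xy³` is
`[0:0:1]`. If `F ∘ M = e • F`, the chain rule makes `F` singular at `M (0,0,1)`, so the third
column of `M` is `(0,0,j)`. Then `F ∘ M` is quadratic in `z`, and comparing its coefficients of
`z², z, 1` with those of `e • F = e y² z² + 2e x²y z + e (x⁴ + xy³)` forces
`M = diag(a, f, j)` with `a² = f j` and `a f = j²`, i.e.
`M = j • diag(ω, ω², 1)` for the cube root of unity `ω = a / j`.
-/

/-- Substitution of the three linear forms determined by a 3×3 matrix `M` into a
polynomial `F` in three variables: `(F ∘ M)(x) = F(Mx)`. -/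
noncomputable def substMat {k : Type*} [CommSemiring k] (M : Matrix (Fin 3) (Fin 3) k)
    (F : MvPolynomial (Fin 3) k) : MvPolynomial (Fin 3) k :=
  MvPolynomial.aeval
    (fun i => ∑ j : Fin 3, MvPolynomial.C (M i j) * MvPolynomial.X j) F

/-- The quartic `F = (x² + yz)² + xy³`, with `(x, y, z) = (X 0, X 1, X 2)`. -/
noncomputable def Fquartic (k : Type*) [CommSemiring k] : MvPolynomial (Fin 3) k :=
  (MvPolynomial.X 0 ^ 2 + MvPolynomial.X 1 * MvPolynomial.X 2) ^ 2
    + MvPolynomial.X 0 * MvPolynomial.X 1 ^ 3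

open MvPolynomial Matrix

section Substitution

variable {k : Type*} [CommSemiring k] (M : Matrix (Fin 3) (Fin 3) k)

theorem eval_substMat (v : Fin 3 → k) (P : MvPolynomial (Fin 3) k) :
    eval v (substMat M P) = eval (M *ᵥ v) P := by
  unfold substMat
  induction P using MvPolynomial.induction_on with
  | C a => simp
  | add p q hp hq => simp only [map_add, hp, hq]
  | mul_X p n ih =>
    simp only [map_mul, aeval_X, ih]
    simp [mulVec, dotProduct]

theorem pderiv_substMat (P : MvPolynomial (Fin 3) k) (l : Fin 3) :
    pderiv l (substMat M P) = ∑ i, C (M i l) * substMat M (pderiv i P) := by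
  unfold substMat
  induction P using MvPolynomial.induction_on with
  | C a => simp
  | add p q hp hq => simp only [map_add, hp, hq, mul_add, Finset.sum_add_distrib]
  | mul_X p n ih =>
    simp only [Derivation.leibniz, ih, pderiv_X, map_add, map_mul, aeval_X, smul_eq_mul,
      mul_add, Finset.sum_add_distrib]
    simp [Pi.single_apply, pderiv_X, Finset.mul_sum, mul_comm, mul_left_comm]

end Substitution

theorem eval_Fquartic {k : Type*} [CommSemiring k] (v : Fin 3 → k) :
    eval v (Fquartic k) = (v 0 ^ 2 + v 1 * v 2) ^ 2 + v 0 * v 1 ^ 3 := by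
  simp [Fquartic]

theorem eval_pderiv_zero_Fquartic {k : Type*} [CommSemiring k] (v : Fin 3 → k) :
    eval v (pderiv 0 (Fquartic k)) = 4 * v 0 * (v 0 ^ 2 + v 1 * v 2) + v 1 ^ 3 := by
  simp only [Fquartic, map_add, map_mul, map_pow, Derivation.leibniz, Derivation.leibniz_pow,
    pderiv_X, Pi.single_eq_same, ne_eq, Fin.reduceEq, not_false_eq_true, Pi.single_eq_of_ne,
    smul_eq_mul, nsmul_eq_mul, Nat.add_one_sub_one, pow_one, mul_one, mul_zero, add_zero,
    zero_add, one_ne_zero, Nat.cast_ofNat, eval_ofNat, eval_X]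
  ring

theorem eval_pderiv_two_Fquartic {k : Type*} [CommSemiring k] (v : Fin 3 → k) :
    eval v (pderiv 2 (Fquartic k)) = 2 * v 1 * (v 0 ^ 2 + v 1 * v 2) := by
  simp only [Fquartic, map_add, map_mul, map_pow, Derivation.leibniz, Derivation.leibniz_pow,
    pderiv_X, Pi.single_eq_same, ne_eq, Fin.reduceEq, not_false_eq_true, Pi.single_eq_of_ne,
    smul_eq_mul, nsmul_eq_mul, Nat.add_one_sub_one, pow_one, mul_one, mul_zero, add_zero,
    zero_add, Nat.cast_ofNat, eval_ofNat, eval_X]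
  ring

def IsSingularPoint {σ k : Type*} [CommSemiring k] (P : MvPolynomial σ k) (v : σ → k) : Prop :=
  eval v P = 0 ∧ ∀ i, eval v (pderiv i P) = 0

namespace IsSingularPoint

theorem C_mul {σ k : Type*} [CommSemiring k] {P : MvPolynomial σ k} {v : σ → k}
    (h : IsSingularPoint P v) (e : k) : IsSingularPoint (C e * P) v :=
  ⟨by simp [h.1], fun i => by simp [h.2 i]⟩

theorem of_substMat {k : Type*} [CommRing k] [IsDomain k]
    {M : Matrix (Fin 3) (Fin 3) k} {P : MvPolynomial (Fin 3) k} {v : Fin 3 → k} (hM : M.det ≠ 0)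
    (h : IsSingularPoint (substMat M P) v) : IsSingularPoint P (M *ᵥ v) := by
  refine ⟨by rw [← eval_substMat, h.1], fun i => ?_⟩
  have hgrad : (fun i => eval (M *ᵥ v) (pderiv i P)) ᵥ* M = 0 := by
    ext l
    simpa [pderiv_substMat, eval_substMat, vecMul, dotProduct, mul_comm] using h.2 l
  exact congrFun (eq_zero_of_vecMul_eq_zero hM hgrad) i

theorem Fquartic_coords_eq_zero {k : Type*} [Field k] (h2 : (2 : k) ≠ 0)
    {v : Fin 3 → k} (h : IsSingularPoint (Fquartic k) v) : v 0 = 0 ∧ v 1 = 0 := by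
  obtain ⟨hF, hgrad⟩ := h
  have hx := hgrad 0
  have hz := hgrad 2
  rw [eval_Fquartic] at hF
  rw [eval_pderiv_zero_Fquartic] at hx
  rw [eval_pderiv_two_Fquartic, mul_assoc, mul_eq_zero] at hz
  rcases hz.resolve_left h2 |> mul_eq_zero.mp with hy | hq
  · have : v 0 ^ 4 = 0 := by
      linear_combination hF - (2 * v 0 ^ 2 * v 2 + v 1 * v 2 ^ 2 + v 0 * v 1 ^ 2) * hy
    exact ⟨pow_eq_zero_iff four_ne_zero |>.mp this, hy⟩
  · have hy : v 1 = 0 :=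
      pow_eq_zero_iff three_ne_zero |>.mp (by linear_combination hx - 4 * v 0 * hq)
    have : v 0 ^ 2 = 0 := by linear_combination hq - v 2 * hy
    exact ⟨pow_eq_zero_iff two_ne_zero |>.mp this, hy⟩

end IsSingularPoint

theorem isSingularPoint_Fquartic_single (k : Type*) [CommSemiring k] :
    IsSingularPoint (Fquartic k) (Pi.single 2 1) := by
  refine ⟨by simp [Fquartic], fun i => ?_⟩
  fin_cases i <;> simp [Fquartic, pderiv_X]

theorem coeffs_eq_of_forall_quadratic_eq {k : Type*} [Field k] (h2 : (2 : k) ≠ 0)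
    {a b c a' b' c' : k} (h : ∀ z : k, a + b * z + c * z ^ 2 = a' + b' * z + c' * z ^ 2) :
    a = a' ∧ b = b' ∧ c = c' := by
  have h0 := h 0
  have h1 := h 1
  have hm := h (-1)
  refine ⟨by linear_combination h0, mul_left_cancel₀ h2 ?_, mul_left_cancel₀ h2 ?_⟩
  · linear_combination h1 - hm
  · linear_combination h1 + hm - 2 * h0

theorem entries_of_forall_eq_mul_quartic {k : Type*} [Field k] (h2 : (2 : k) ≠ 0)
    {a b d f h i j e : k} (hj : j ≠ 0) (he : e ≠ 0)
    (hev : ∀ x y z : k,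
      ((a * x + b * y) ^ 2 + (d * x + f * y) * (h * x + i * y + j * z)) ^ 2
        + (a * x + b * y) * (d * x + f * y) ^ 3 = e * ((x ^ 2 + y * z) ^ 2 + x * y ^ 3)) :
    b = 0 ∧ d = 0 ∧ h = 0 ∧ i = 0 ∧ a ^ 2 = f * j ∧ a * f = j ^ 2 := by
  have hz : ∀ x y : k,
      ((a * x + b * y) ^ 2 + (d * x + f * y) * (h * x + i * y)) ^ 2
          + (a * x + b * y) * (d * x + f * y) ^ 3 = e * (x ^ 4 + x * y ^ 3) ∧
        2 * ((a * x + b * y) ^ 2 + (d * x + f * y) * (h * x + i * y)) * (d * x + f * y) * j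
          = 2 * e * x ^ 2 * y ∧
        (d * x + f * y) ^ 2 * j ^ 2 = e * y ^ 2 := fun x y =>
    coeffs_eq_of_forall_quadratic_eq h2 fun z => by linear_combination hev x y z
  have hd : d = 0 := by simpa [hj] using (hz 1 0).2.2
  subst hd
  have hfje : f ^ 2 * j ^ 2 = e := by simpa using (hz 0 1).2.2
  have hf : f ≠ 0 := by rintro rfl; simp [eq_comm, he] at hfje
  have h2fj : 2 * f * j ≠ 0 := mul_ne_zero (mul_ne_zero h2 hf) hj
  obtain ⟨hbi, hbh, hsq⟩ := coeffs_eq_of_forall_quadratic_eq h2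
    (a := b ^ 2 + f * i) (b := 2 * a * b + f * h) (c := a ^ 2) (a' := 0) (b' := 0) (c' := f * j)
    fun x => mul_left_cancel₀ h2fj <| by linear_combination (hz x 1).2.1 - 2 * x ^ 2 * hfje
  have hb : b = 0 := by
    have : b * f ^ 3 = 0 := by linear_combination (hz 0 1).1 - (b ^ 2 + f * i) * hbi
    simpa [hf] using this
  subst hb
  have hi : i = 0 := by simpa [hf] using hbi
  have hh : h = 0 := by simpa [hf] using hbh
  subst hi hh
  refine ⟨rfl, rfl, rfl, rfl, hsq, mul_left_cancel₀ (pow_ne_zero 2 hf) ?_⟩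
  linear_combination (hz 1 1).1 - 2 * hfje - (a ^ 2 + f * j) * hsq

theorem substMat_smul_diagonal_Fquartic {k : Type*} [CommRing k] (s : k) {ω : k}
    (hω : ω ^ 3 = 1) :
    substMat (s • diagonal ![ω, ω ^ 2, 1]) (Fquartic k) = C (s ^ 4 * ω ^ 4) * Fquartic k := by
  have hC : (C ω : MvPolynomial (Fin 3) k) ^ 3 = 1 := by rw [← map_pow, hω, map_one]
  simp only [substMat, Fquartic, aeval_eq_bind₁, map_add, map_mul, map_pow, bind₁_X_right,
    Fin.sum_univ_three, Matrix.smul_apply, diagonal_apply, smul_eq_mul, Fin.reduceEq,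
    ↓reduceIte, mul_ite, mul_zero, C_0, zero_mul, add_zero, zero_add, cons_val_zero,
    cons_val_one, cons_val, mul_one]
  -- the `xy³` term picks up `ω · ω⁶ = ω⁴ · ω³`
  linear_combination (C s ^ 4 * C ω ^ 4 * X 0 * X 1 ^ 3) * hC

theorem diagonal_eq_smul_diagonal_of_sq_eq {k : Type*} [Field k] {a f j : k} (hj : j ≠ 0)
    (hsq : a ^ 2 = f * j) (hprod : a * f = j ^ 2) :
    (a / j) ^ 3 = 1 ∧ diagonal ![a, f, j] = j • diagonal ![a / j, (a / j) ^ 2, 1] := by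
  have hf : f = (a / j) ^ 2 * j := by field_simp; exact hsq.symm
  refine ⟨?_, ?_⟩
  · field_simp
    linear_combination a * hsq + j * hprod
  · rw [← diagonal_smul, smul_cons, smul_cons, smul_cons, smul_empty, hf, smul_eq_mul,
      smul_eq_mul, smul_eq_mul, mul_one, mul_div_cancel₀ a hj, mul_comm j]

theorem exists_smul_diagonal_of_substMat_eq {k : Type*} [Field k] (h2 : (2 : k) ≠ 0)
    {N : Matrix (Fin 3) (Fin 3) k} (hN : N.det ≠ 0) {e : k} (he : e ≠ 0)
    (h : substMat N (Fquartic k) = C e * Fquartic k) :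
    ∃ (s : kˣ) (ω : k), ω ^ 3 = 1 ∧ N = (s : k) • diagonal ![ω, ω ^ 2, 1] := by
  have hsing : IsSingularPoint (Fquartic k) (N *ᵥ Pi.single 2 1) :=
    .of_substMat hN (h ▸ (isSingularPoint_Fquartic_single k).C_mul e)
  obtain ⟨h02, h12⟩ := hsing.Fquartic_coords_eq_zero h2
  simp only [mulVec_single_one, col_apply] at h02 h12
  have hdet : N.det = N 2 2 * (N 0 0 * N 1 1 - N 0 1 * N 1 0) := by
    rw [det_fin_three, h02, h12]; ring
  have hj : N 2 2 ≠ 0 := left_ne_zero_of_mul (hdet ▸ hN)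
  obtain ⟨h01, h10, h20, h21, hsq, hprod⟩ := entries_of_forall_eq_mul_quartic h2 hj he
    fun x y z => by
      simpa [eval_substMat, eval_Fquartic, mulVec, dotProduct, Fin.sum_univ_three, h02, h12]
        using congrArg (eval ![x, y, z]) h
  obtain ⟨hω, hdiag⟩ := diagonal_eq_smul_diagonal_of_sq_eq hj hsq hprod
  refine ⟨Units.mk0 _ hj, _, hω, ?_⟩
  rw [Units.val_mk0, ← hdiag]
  ext i l
  fin_cases i <;> fin_cases l <;> simp [h01, h02, h10, h12, h20, h21]

theorem stmt_11_general (k : Type*) [Field k] (hchar : ringChar k = 7) :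
    (∀ (M : Matrix.GeneralLinearGroup (Fin 3) k) (e : kˣ),
        substMat (M : Matrix (Fin 3) (Fin 3) k) (Fquartic k)
            = MvPolynomial.C (e : k) * Fquartic k →
        ∃ (s : kˣ) (ω : k), ω ^ 3 = 1 ∧
          (M : Matrix (Fin 3) (Fin 3) k) = (s : k) • Matrix.diagonal ![ω, ω ^ 2, 1]) ∧
    (∀ ω : k, ω ^ 3 = 1 →
        substMat (Matrix.diagonal ![ω, ω ^ 2, 1]) (Fquartic k)
          = MvPolynomial.C (ω ^ 4) * Fquartic k) ∧
    (∀ M : Matrix.GeneralLinearGroup (Fin 3) k,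
        (∃ e : kˣ, substMat (M : Matrix (Fin 3) (Fin 3) k) (Fquartic k)
            = MvPolynomial.C (e : k) * Fquartic k) ↔
        ∃ (s : kˣ) (ω : k), ω ^ 3 = 1 ∧
          (M : Matrix (Fin 3) (Fin 3) k) = (s : k) • Matrix.diagonal ![ω, ω ^ 2, 1]) := by
  have h2 : (2 : k) ≠ 0 := fun h => by
    have := (ringChar.spec k 2).mp (by exact_mod_cast h)
    rw [hchar] at this
    norm_num at this
  have forward (M : Matrix.GeneralLinearGroup (Fin 3) k) (e : kˣ)
      (h : substMat (M : Matrix (Fin 3) (Fin 3) k) (Fquartic k) = C (e : k) * Fquartic k) :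
      ∃ (s : kˣ) (ω : k), ω ^ 3 = 1 ∧
        (M : Matrix (Fin 3) (Fin 3) k) = (s : k) • diagonal ![ω, ω ^ 2, 1] :=
    exists_smul_diagonal_of_substMat_eq h2 ((isUnit_iff_isUnit_det _).mp M.isUnit).ne_zero
      e.ne_zero h
  refine ⟨forward, fun ω hω => by simpa using substMat_smul_diagonal_Fquartic 1 hω,
    fun M => ⟨fun ⟨e, h⟩ => forward M e h, ?_⟩⟩
  rintro ⟨s, ω, hω, hM⟩
  have hω0 : ω ≠ 0 := by rintro rfl; norm_num at hω
  refine ⟨s ^ 4 * Units.mk0 ω hω0 ^ 4, ?_⟩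
  rw [hM, substMat_smul_diagonal_Fquartic _ hω]
  simp

/-- over an algebraically closed field of characteristic 7, any
`M ∈ GL₃(k)` with `F ∘ M = e·F` (`e ∈ kˣ`) is a nonzero scalar multiple of
`diag(ω, ω², 1)` with `ω³ = 1`; conversely `F ∘ diag(ω, ω², 1) = ω⁴·F` for every
cube root of unity `ω`; in particular `F ∘ M = e·F` (for some `e ∈ kˣ`) holds exactly
for the scalar multiples of the matrices `diag(ω, ω², 1)` with `ω³ = 1`. -/
theorem stmt_11 (k : Type*) [Field k] [IsAlgClosed k] (hchar : ringChar k = 7) :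
    (∀ (M : Matrix.GeneralLinearGroup (Fin 3) k) (e : kˣ),
        substMat (M : Matrix (Fin 3) (Fin 3) k) (Fquartic k)
            = MvPolynomial.C (e : k) * Fquartic k →
        ∃ (s : kˣ) (ω : k), ω ^ 3 = 1 ∧
          (M : Matrix (Fin 3) (Fin 3) k) = (s : k) • Matrix.diagonal ![ω, ω ^ 2, 1]) ∧
    (∀ ω : k, ω ^ 3 = 1 →
        substMat (Matrix.diagonal ![ω, ω ^ 2, 1]) (Fquartic k)
          = MvPolynomial.C (ω ^ 4) * Fquartic k) ∧
    (∀ M : Matrix.GeneralLinearGroup (Fin 3) k,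
        (∃ e : kˣ, substMat (M : Matrix (Fin 3) (Fin 3) k) (Fquartic k)
            = MvPolynomial.C (e : k) * Fquartic k) ↔
        ∃ (s : kˣ) (ω : k), ω ^ 3 = 1 ∧
          (M : Matrix (Fin 3) (Fin 3) k) = (s : k) • Matrix.diagonal ![ω, ω ^ 2, 1]) :=
  stmt_11_general k hchar
end

section
/- Let k be an algebraically closed field with char k ≠ 2, and let λ, μ, ν ∈ k with μ ≠ 0. Then there exist M ∈ GL₃(k) and e ∈ kˣ such that ((x²+yz)² + λy²(x²+yz) + μxy³ + νy⁴) ∘ M = e·((x²+yz)² + xy³), where ∘ M denotes substituting into the polynomial the three linear forms determined by M. -/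
set_option maxHeartbeats 40000000 in
/-- over an algebraically closed field of characteristic ≠ 2, for any
`λ, μ, ν ∈ k` with `μ ≠ 0`, the quartic `(x²+yz)² + λy²(x²+yz) + μxy³ + νy⁴` can be
brought, by a linear change of coordinates `M ∈ GL₃(k)` and up to a nonzero scalar `e`,
to the normal form `(x²+yz)² + xy³`. -/
theorem stmt_12 (k : Type*) [Field k] [IsAlgClosed k] (hchar : ringChar k ≠ 2)
    (l μ ν : k) (hμ : μ ≠ 0) :
    ∃ (M : Matrix.GeneralLinearGroup (Fin 3) k) (e : kˣ),
      substMat (M : Matrix (Fin 3) (Fin 3) k)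
          ((MvPolynomial.X 0 ^ 2 + MvPolynomial.X 1 * MvPolynomial.X 2) ^ 2
            + MvPolynomial.C l * (MvPolynomial.X 1 ^ 2
                * (MvPolynomial.X 0 ^ 2 + MvPolynomial.X 1 * MvPolynomial.X 2))
            + MvPolynomial.C μ * (MvPolynomial.X 0 * MvPolynomial.X 1 ^ 3)
            + MvPolynomial.C ν * MvPolynomial.X 1 ^ 4)
        = MvPolynomial.C (e : k) * Fquartic k := by
  have h2 : (2 : k) ≠ 0 := Ring.two_ne_zero hchar
  obtain ⟨c, hc⟩ := IsAlgClosed.exists_pow_nat_eq μ (n := 3) (by norm_num)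
  have hc0 : c ≠ 0 := by
    rintro rfl; exact hμ (by simpa using hc.symm)
  subst hc
  have hdet0 : (!![16 * c ^ 7, 4 * c ^ 3 * (l ^ 2 - 4 * ν), 0;
       0, 16 * c ^ 6, 0;
       -8 * c ^ 4 * (l ^ 2 - 4 * ν), -((l ^ 2 - 4 * ν) ^ 2 + 8 * l * c ^ 6), 16 * c ^ 8] :
       Matrix (Fin 3) (Fin 3) k).det ≠ 0 := by
    have hd : (!![16 * c ^ 7, 4 * c ^ 3 * (l ^ 2 - 4 * ν), 0;
       0, 16 * c ^ 6, 0;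
       -8 * c ^ 4 * (l ^ 2 - 4 * ν), -((l ^ 2 - 4 * ν) ^ 2 + 8 * l * c ^ 6), 16 * c ^ 8] :
       Matrix (Fin 3) (Fin 3) k).det = 4096 * c ^ 21 := by
      simp [Matrix.det_fin_three]; ring
    rw [hd]
    refine mul_ne_zero ?_ (pow_ne_zero _ hc0)
    rw [show (4096 : k) = 2 ^ 12 by norm_num]; exact pow_ne_zero _ h2
  have he : (65536 : k) * c ^ 28 ≠ 0 := by
    refine mul_ne_zero ?_ (pow_ne_zero _ hc0)
    rw [show (65536 : k) = 2 ^ 16 by norm_num]; exact pow_ne_zero _ h2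
  refine ⟨Matrix.GeneralLinearGroup.mkOfDetNeZero _ hdet0, Units.mk0 _ he, ?_⟩
  apply MvPolynomial.funext
  intro x
  have key : ((Matrix.GeneralLinearGroup.mkOfDetNeZero _ hdet0 :
      Matrix.GeneralLinearGroup (Fin 3) k) : Matrix (Fin 3) (Fin 3) k) =
      !![16 * c ^ 7, 4 * c ^ 3 * (l ^ 2 - 4 * ν), 0;
       0, 16 * c ^ 6, 0;
       -8 * c ^ 4 * (l ^ 2 - 4 * ν), -((l ^ 2 - 4 * ν) ^ 2 + 8 * l * c ^ 6), 16 * c ^ 8] := rfl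
  simp only [key, substMat, Fquartic, map_add, map_mul, map_pow, MvPolynomial.eval_add,
    MvPolynomial.eval_mul, MvPolynomial.eval_pow, MvPolynomial.eval_C,
    MvPolynomial.aeval_X, MvPolynomial.aeval_C, MvPolynomial.eval_X,
    MvPolynomial.algebraMap_eq, Fin.sum_univ_three,
    Fin.isValue, Matrix.of_apply, Matrix.cons_val', Matrix.cons_val_zero, Matrix.cons_val_one,
    Matrix.head_cons, Matrix.empty_val', Matrix.cons_val_fin_one, Matrix.cons_val_two,
    Nat.succ_eq_add_one, Nat.reduceAdd, Matrix.tail_cons, Matrix.head_fin_const,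
    Units.val_mk0]
  ring
end
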